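/- arXiv:2408.01413 — 2 statements merged into one kernel-verified Lean document; each statement's English description precedes it below -/
import Mathlib

section
/- Suppose 0 < τ₁ < τ₂, and let σ¹ and σ² be strategy distributions of Wardrop equilibria for tolls τ₁ and τ₂ respectively (all other model data fixed). Then ℓ_δ(σ²) ≥ ℓ_δ(σ¹), σ²_toll ≤ σ¹_toll, and σ²_pool ≥ σ¹_pool. -/
/-!
Agent `(β, γ)` pays the toll, carpools or stays on the ordinary lane according to which of
`τ`, `γ` and `β ℓ_δ` is smallest, ties forming a null set. If raising the toll lowered `ℓ_δ`,
every toll payer at the higher toll would already pay it at the lower one, and every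
ordinary-lane user at the lower toll would stay there at the higher one (off the null line
`γ = 0`). That moves flow from the HOT lane to the ordinary lane, which can only raise `ℓ_δ`.
Once `ℓ_δ` does not decrease, carpoolers remain carpoolers (off the line `γ = ℓ_δ β`), and if
the toll share nevertheless grew, the ordinary lane would strictly lose flow to the HOT lane and
`ℓ_δ` would strictly drop.
-/

open MeasureTheory Set

namespace HOT

inductive Action : Type
  | toll
  | pool
  | o
  deriving DecidableEq

instance : MeasurableSpace Action := ⊤

/-- The rectangle of preference parameters `[0,β̄] × [0,γ̄]`. -/
def Rbox (βb γb : ℝ) : Set (ℝ × ℝ) := Icc (0:ℝ) βb ×ˢ Icc (0:ℝ) γb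

/-- The strategy distribution of a strategy profile `s`: the `f`-mass of agents
in the rectangle choosing each action. -/
noncomputable def stratDist (βb γb : ℝ) (f : ℝ × ℝ → ℝ) (s : ℝ × ℝ → Action)
    (a : Action) : ℝ :=
  ∫ p in Rbox βb γb ∩ s ⁻¹' {a}, f p

/-- HOT-lane vehicle flow induced by a strategy distribution. -/
noncomputable def xh (A : ℕ) (D : ℝ) (σ : Action → ℝ) : ℝ :=
  (σ Action.toll + σ Action.pool / (A : ℝ)) * D

/-- Ordinary-lane vehicle flow induced by a strategy distribution. -/
noncomputable def xo (D : ℝ) (σ : Action → ℝ) : ℝ := σ Action.o * D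

/-- Latency difference `ℓ_δ(σ) = ℓ_o(x_o(σ)) − ℓ_h(x_h(σ))`. -/
noncomputable def ldiff (ℓo ℓh : ℝ → ℝ) (A : ℕ) (D : ℝ) (σ : Action → ℝ) : ℝ :=
  ℓo (xo D σ) - ℓh (xh A D σ)

/-- The cost of agent `(β,γ)` for each action, given a strategy distribution. -/
noncomputable def cost (ℓo ℓh : ℝ → ℝ) (A : ℕ) (D τ : ℝ) (σ : Action → ℝ)
    (β γ : ℝ) : Action → ℝ
  | Action.toll => β * ℓh (xh A D σ) + τ
  | Action.pool => β * ℓh (xh A D σ) + γ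
  | Action.o => β * ℓo (xo D σ)

/-- Wardrop equilibrium: every agent's action minimizes its own cost. -/
def IsWardrop (ℓo ℓh : ℝ → ℝ) (A : ℕ) (D τ βb γb : ℝ) (f : ℝ × ℝ → ℝ)
    (s : ℝ × ℝ → Action) : Prop :=
  Measurable s ∧
  ∀ p ∈ Rbox βb γb, ∀ a : Action,
    cost ℓo ℓh A D τ (stratDist βb γb f s) p.1 p.2 (s p) ≤
      cost ℓo ℓh A D τ (stratDist βb γb f s) p.1 p.2 a

/-- Threshold carpool share `σ†_pool = ∫₀^β̄ ∫₀^{min(τ,γ̄)·β/β̄} f`. -/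
noncomputable def sigmaDagger (βb γb τ : ℝ) (f : ℝ × ℝ → ℝ) : ℝ :=
  ∫ β in (0:ℝ)..βb, ∫ γ in (0:ℝ)..(min τ γb * β / βb), f (β, γ)

/-- Threshold latency difference `ℓ† = ℓ_o((1−σ†)·D) − ℓ_h((σ†/A)·D)`. -/
noncomputable def ellDagger (ℓo ℓh : ℝ → ℝ) (A : ℕ) (D βb γb τ : ℝ)
    (f : ℝ × ℝ → ℝ) : ℝ :=
  ℓo ((1 - sigmaDagger βb γb τ f) * D) - ℓh (sigmaDagger βb γb τ f / (A : ℝ) * D)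

/-- Regime-B toll share as a function of the latency difference `δ`. -/
noncomputable def gB (τ βb γb : ℝ) (f : ℝ × ℝ → ℝ) (δ : ℝ) : ℝ :=
  ∫ γ in τ..γb, ∫ β in (τ / δ)..βb, f (β, γ)

/-- Regime-B carpool share as a function of the latency difference `δ`. -/
noncomputable def hB (τ βb : ℝ) (f : ℝ × ℝ → ℝ) (δ : ℝ) : ℝ :=
  ∫ γ in (0:ℝ)..τ, ∫ β in (γ / δ)..βb, f (β, γ)

end HOT

namespace HOT

theorem volume_setOf_snd_eq_mul_fst (c : ℝ) : volume {p : ℝ × ℝ | p.2 = c * p.1} = 0 := by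
  set L := LinearMap.snd ℝ ℝ ℝ - c • LinearMap.fst ℝ ℝ ℝ
  have hL : {p : ℝ × ℝ | p.2 = c * p.1} = (LinearMap.ker L : Set (ℝ × ℝ)) := by
    ext p
    simp [L, sub_eq_zero]
  rw [hL]
  refine Measure.addHaar_submodule _ _ fun htop => ?_
  have : ((1 : ℝ), c + 1) ∈ LinearMap.ker L := htop ▸ Submodule.mem_top
  simp [L] at this

theorem ae_snd_ne_mul_fst (c : ℝ) : ∀ᵐ p : ℝ × ℝ, p.2 ≠ c * p.1 :=
  ae_iff.2 (by simpa using volume_setOf_snd_eq_mul_fst c)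

variable {ℓo ℓh : ℝ → ℝ} {A : ℕ} {D βb γb τ τ' : ℝ} {f : ℝ × ℝ → ℝ}
  {s s' : ℝ × ℝ → Action} {p : ℝ × ℝ}

namespace IsWardrop

theorem le_of_eq_toll (hs : IsWardrop ℓo ℓh A D τ βb γb f s) (hp : p ∈ Rbox βb γb)
    (h : s p = .toll) :
    τ ≤ p.2 ∧ τ ≤ p.1 * ldiff ℓo ℓh A D (stratDist βb γb f s) := by
  have hpool := hs.2 p hp .pool
  have ho := hs.2 p hp .o
  simp only [h, cost] at hpool ho
  rw [ldiff, mul_sub]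
  constructor <;> linarith

theorem le_of_eq_pool (hs : IsWardrop ℓo ℓh A D τ βb γb f s) (hp : p ∈ Rbox βb γb)
    (h : s p = .pool) :
    p.2 ≤ τ ∧ p.2 ≤ p.1 * ldiff ℓo ℓh A D (stratDist βb γb f s) := by
  have htoll := hs.2 p hp .toll
  have ho := hs.2 p hp .o
  simp only [h, cost] at htoll ho
  rw [ldiff, mul_sub]
  constructor <;> linarith

theorem le_of_eq_o (hs : IsWardrop ℓo ℓh A D τ βb γb f s) (hp : p ∈ Rbox βb γb)
    (h : s p = .o) :
    p.1 * ldiff ℓo ℓh A D (stratDist βb γb f s) ≤ τ ∧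
      p.1 * ldiff ℓo ℓh A D (stratDist βb γb f s) ≤ p.2 := by
  have htoll := hs.2 p hp .toll
  have hpool := hs.2 p hp .pool
  simp only [h, cost] at htoll hpool
  rw [ldiff, mul_sub]
  constructor <;> linarith

theorem eq_toll_of_lt (hs : IsWardrop ℓo ℓh A D τ βb γb f s) (hp : p ∈ Rbox βb γb)
    (hγ : τ < p.2) (hβ : τ < p.1 * ldiff ℓo ℓh A D (stratDist βb γb f s)) :
    s p = .toll := by
  rcases h : s p
  · rfl
  · linarith [(hs.le_of_eq_pool hp h).1]
  · linarith [(hs.le_of_eq_o hp h).1]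

theorem eq_pool_of_lt (hs : IsWardrop ℓo ℓh A D τ βb γb f s) (hp : p ∈ Rbox βb γb)
    (hγ : p.2 < τ) (hβ : p.2 < p.1 * ldiff ℓo ℓh A D (stratDist βb γb f s)) :
    s p = .pool := by
  rcases h : s p
  · linarith [(hs.le_of_eq_toll hp h).1]
  · rfl
  · linarith [(hs.le_of_eq_o hp h).2]

theorem eq_toll_of_eq_toll (hs : IsWardrop ℓo ℓh A D τ βb γb f s)
    (hs' : IsWardrop ℓo ℓh A D τ' βb γb f s') (hτ : τ < τ')
    (hδ : ldiff ℓo ℓh A D (stratDist βb γb f s') ≤ ldiff ℓo ℓh A D (stratDist βb γb f s))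
    (hp : p ∈ Rbox βb γb) (h : s' p = .toll) : s p = .toll := by
  obtain ⟨hγ, hβ⟩ := hs'.le_of_eq_toll hp h
  have := mul_le_mul_of_nonneg_left hδ hp.1.1
  exact hs.eq_toll_of_lt hp (by linarith) (by linarith)

theorem eq_o_of_eq_o (hs : IsWardrop ℓo ℓh A D τ βb γb f s)
    (hs' : IsWardrop ℓo ℓh A D τ' βb γb f s') (hτ : τ < τ')
    (hδ : ldiff ℓo ℓh A D (stratDist βb γb f s') < ldiff ℓo ℓh A D (stratDist βb γb f s))
    (hp : p ∈ Rbox βb γb) (h : s p = .o) (hγ0 : p.2 ≠ 0) : s' p = .o := by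
  obtain ⟨hτβ, hγβ⟩ := hs.le_of_eq_o hp h
  have hβ : 0 ≤ p.1 := hp.1.1
  rcases h' : s' p
  · linarith [(hs'.le_of_eq_toll hp h').2, mul_le_mul_of_nonneg_left hδ.le hβ]
  · have hγβ' := (hs'.le_of_eq_pool hp h').2
    have hγ : 0 < p.2 := hp.2.1.lt_of_ne' hγ0
    have hβ : 0 < p.1 := hβ.lt_of_ne' fun hβ0 => by simp [hβ0] at hγβ'; linarith
    linarith [mul_lt_mul_of_pos_left hδ hβ]
  · rfl

theorem eq_pool_of_eq_pool (hs : IsWardrop ℓo ℓh A D τ βb γb f s)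
    (hs' : IsWardrop ℓo ℓh A D τ' βb γb f s') (hτ : τ < τ')
    (hδ : ldiff ℓo ℓh A D (stratDist βb γb f s) ≤ ldiff ℓo ℓh A D (stratDist βb γb f s'))
    (hp : p ∈ Rbox βb γb) (h : s p = .pool)
    (hline : p.2 ≠ ldiff ℓo ℓh A D (stratDist βb γb f s') * p.1) : s' p = .pool := by
  obtain ⟨hγτ, hγβ⟩ := hs.le_of_eq_pool hp h
  have := mul_le_mul_of_nonneg_left hδ hp.1.1
  refine hs'.eq_pool_of_lt hp (hγτ.trans_lt hτ) (lt_of_le_of_ne (hγβ.trans this) ?_)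
  rwa [mul_comm]

end IsWardrop

theorem measurableSet_rbox_inter_preimage (hs : Measurable s) (a : Action) :
    MeasurableSet (Rbox βb γb ∩ s ⁻¹' {a}) :=
  (measurableSet_Icc.prod measurableSet_Icc).inter (hs MeasurableSpace.measurableSet_top)

theorem stratDist_nonneg (hs : Measurable s) (hf0 : ∀ p ∈ Rbox βb γb, 0 ≤ f p)
    (a : Action) : 0 ≤ stratDist βb γb f s a :=
  setIntegral_nonneg (measurableSet_rbox_inter_preimage hs a) fun p hp => hf0 p hp.1

theorem stratDist_toll_add_pool_add_o (hs : Measurable s) (hf : IntegrableOn f (Rbox βb γb)) :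
    stratDist βb γb f s .toll + stratDist βb γb f s .pool + stratDist βb γb f s .o =
      ∫ p in Rbox βb γb, f p := by
  set R := Rbox βb γb
  have hm := measurableSet_rbox_inter_preimage (βb := βb) (γb := γb) hs
  have hfi (a : Action) : IntegrableOn f (R ∩ s ⁻¹' {a}) := hf.mono_set inter_subset_left
  have hdisj {a b : Action} (hab : a ≠ b) : Disjoint (R ∩ s ⁻¹' {a}) (R ∩ s ⁻¹' {b}) :=
    ((disjoint_singleton.2 hab).preimage s).mono inter_subset_right inter_subset_right
  have hcover : R = (R ∩ s ⁻¹' {.toll} ∪ R ∩ s ⁻¹' {.pool}) ∪ R ∩ s ⁻¹' {.o} := by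
    ext p
    cases h : s p <;> simp [h]
  rw [hcover, setIntegral_union _ (hm _) ((hfi _).union (hfi _)) (hfi _),
    setIntegral_union (hdisj (by decide)) (hm _) (hfi _) (hfi _)]
  · rfl
  · exact (hdisj (by decide)).union_left (hdisj (by decide))

theorem stratDist_le_stratDist {a a' : Action} (hs' : Measurable s')
    (hf : IntegrableOn f (Rbox βb γb)) (hf0 : ∀ p ∈ Rbox βb γb, 0 ≤ f p)
    (h : ∀ᵐ p, p ∈ Rbox βb γb → s p = a → s' p = a') :
    stratDist βb γb f s a ≤ stratDist βb γb f s' a' := by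
  refine setIntegral_mono_set (hf.mono_set inter_subset_left) ?_ ?_
  · exact (ae_restrict_iff' (measurableSet_rbox_inter_preimage hs' a')).2
      (ae_of_all _ fun p hp => hf0 p hp.1)
  · exact h.mono fun p hp ⟨hR, ha⟩ => ⟨hR, hp hR ha⟩

theorem xh_le_xh {σ σ' : Action → ℝ} (hD : 0 ≤ D) (hA : 1 ≤ (A : ℝ))
    (htot : σ' .toll + σ' .pool + σ' .o = σ .toll + σ .pool + σ .o)
    (htoll : σ' .toll ≤ σ .toll) (ho : σ .o ≤ σ' .o) : xh A D σ' ≤ xh A D σ := by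
  have hpool : (σ' .pool - σ .pool) / A ≤ σ .toll - σ' .toll :=
    (div_le_div_of_nonneg_right (by linarith) (by linarith)).trans
      (div_le_self (sub_nonneg.2 htoll) hA)
  rw [sub_div] at hpool
  exact mul_le_mul_of_nonneg_right (by linarith) hD

theorem xh_nonneg {σ : Action → ℝ} (hD : 0 ≤ D) (hσ : ∀ a, 0 ≤ σ a) : 0 ≤ xh A D σ := by
  unfold xh
  have := hσ .toll
  have := hσ .pool
  positivity

theorem xo_nonneg {σ : Action → ℝ} (hD : 0 ≤ D) (hσ : ∀ a, 0 ≤ σ a) : 0 ≤ xo D σ :=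
  mul_nonneg (hσ .o) hD

theorem ldiff_le_ldiff {σ σ' : Action → ℝ} (hD : 0 ≤ D) (hA : 1 ≤ (A : ℝ))
    (hom : MonotoneOn ℓo (Ici 0)) (hhm : MonotoneOn ℓh (Ici 0))
    (hσ : ∀ a, 0 ≤ σ a) (hσ' : ∀ a, 0 ≤ σ' a)
    (htot : σ' .toll + σ' .pool + σ' .o = σ .toll + σ .pool + σ .o)
    (htoll : σ' .toll ≤ σ .toll) (ho : σ .o ≤ σ' .o) :
    ldiff ℓo ℓh A D σ ≤ ldiff ℓo ℓh A D σ' :=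
  sub_le_sub (hom (xo_nonneg hD hσ) (xo_nonneg hD hσ') (mul_le_mul_of_nonneg_right ho hD))
    (hhm (xh_nonneg hD hσ') (xh_nonneg hD hσ) (xh_le_xh hD hA htot htoll ho))

theorem ldiff_lt_ldiff {σ σ' : Action → ℝ} (hD : 0 < D) (hA : 1 ≤ (A : ℝ))
    (hom : StrictMonoOn ℓo (Ici 0)) (hhm : MonotoneOn ℓh (Ici 0))
    (hσ : ∀ a, 0 ≤ σ a) (hσ' : ∀ a, 0 ≤ σ' a)
    (htot : σ' .toll + σ' .pool + σ' .o = σ .toll + σ .pool + σ .o)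
    (htoll : σ' .toll ≤ σ .toll) (ho : σ .o < σ' .o) :
    ldiff ℓo ℓh A D σ < ldiff ℓo ℓh A D σ' :=
  (sub_lt_sub_right
    (hom (xo_nonneg hD.le hσ) (xo_nonneg hD.le hσ') (mul_lt_mul_of_pos_right ho hD)) _).trans_le
    (sub_le_sub_left
      (hhm (xh_nonneg hD.le hσ') (xh_nonneg hD.le hσ) (xh_le_xh hD.le hA htot htoll ho.le)) _)

theorem ldiff_stratDist_le_of_lt (hD : 0 ≤ D) (hA : 1 ≤ (A : ℝ))
    (hom : MonotoneOn ℓo (Ici 0)) (hhm : MonotoneOn ℓh (Ici 0))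
    (hf : IntegrableOn f (Rbox βb γb)) (hf0 : ∀ p ∈ Rbox βb γb, 0 ≤ f p) (hτ : τ < τ')
    (hs : IsWardrop ℓo ℓh A D τ βb γb f s) (hs' : IsWardrop ℓo ℓh A D τ' βb γb f s') :
    ldiff ℓo ℓh A D (stratDist βb γb f s) ≤ ldiff ℓo ℓh A D (stratDist βb γb f s') := by
  by_contra! hδ
  have htoll : stratDist βb γb f s' .toll ≤ stratDist βb γb f s .toll :=
    stratDist_le_stratDist hs.1 hf hf0 <|
      ae_of_all _ fun p hp h => hs.eq_toll_of_eq_toll hs' hτ hδ.le hp h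
  have ho : stratDist βb γb f s .o ≤ stratDist βb γb f s' .o :=
    stratDist_le_stratDist hs'.1 hf hf0 <| (ae_snd_ne_mul_fst 0).mono fun _ hγ hp h =>
      hs.eq_o_of_eq_o hs' hτ hδ hp h (by simpa using hγ)
  have htot := (stratDist_toll_add_pool_add_o hs'.1 hf).trans
    (stratDist_toll_add_pool_add_o hs.1 hf).symm
  exact hδ.not_ge <| ldiff_le_ldiff hD hA hom hhm (stratDist_nonneg hs.1 hf0)
    (stratDist_nonneg hs'.1 hf0) htot htoll ho

theorem stratDist_pool_le_of_lt (hf : IntegrableOn f (Rbox βb γb))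
    (hf0 : ∀ p ∈ Rbox βb γb, 0 ≤ f p) (hτ : τ < τ')
    (hs : IsWardrop ℓo ℓh A D τ βb γb f s) (hs' : IsWardrop ℓo ℓh A D τ' βb γb f s')
    (hδ : ldiff ℓo ℓh A D (stratDist βb γb f s) ≤ ldiff ℓo ℓh A D (stratDist βb γb f s')) :
    stratDist βb γb f s .pool ≤ stratDist βb γb f s' .pool :=
  stratDist_le_stratDist hs'.1 hf hf0 <| (ae_snd_ne_mul_fst _).mono fun _ hline hp h =>
    hs.eq_pool_of_eq_pool hs' hτ hδ hp h hline

theorem stratDist_toll_le_of_ldiff_le (hD : 0 < D) (hA : 1 ≤ (A : ℝ))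
    (hom : StrictMonoOn ℓo (Ici 0)) (hhm : MonotoneOn ℓh (Ici 0))
    (hf : IntegrableOn f (Rbox βb γb)) (hf0 : ∀ p ∈ Rbox βb γb, 0 ≤ f p)
    (hs : IsWardrop ℓo ℓh A D τ βb γb f s) (hs' : IsWardrop ℓo ℓh A D τ' βb γb f s')
    (hδ : ldiff ℓo ℓh A D (stratDist βb γb f s) ≤ ldiff ℓo ℓh A D (stratDist βb γb f s'))
    (hpool : stratDist βb γb f s .pool ≤ stratDist βb γb f s' .pool) :
    stratDist βb γb f s' .toll ≤ stratDist βb γb f s .toll := by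
  by_contra! htoll
  have htot := stratDist_toll_add_pool_add_o hs.1 hf
  rw [← stratDist_toll_add_pool_add_o hs'.1 hf] at htot
  have ho : stratDist βb γb f s' .o < stratDist βb γb f s .o := by linarith
  exact hδ.not_gt <| ldiff_lt_ldiff hD hA hom hhm (stratDist_nonneg hs'.1 hf0)
    (stratDist_nonneg hs.1 hf0) htot htoll.le ho

end HOT

open HOT

theorem stmt12_general
    (ℓo ℓh : ℝ → ℝ) (A : ℕ) (D βb γb : ℝ) (f : ℝ × ℝ → ℝ)
    (hD : 0 < D) (hA : 2 ≤ A)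
    (hom : StrictMonoOn ℓo (Ici 0)) (hhm : StrictMonoOn ℓh (Ici 0))
    (hfc : ContinuousOn f (Rbox βb γb)) (hfpos : ∀ p ∈ Rbox βb γb, 0 < f p)
    (τ₁ τ₂ : ℝ) (hττ : τ₁ < τ₂)
    (s₁ s₂ : ℝ × ℝ → Action)
    (hs₁ : IsWardrop ℓo ℓh A D τ₁ βb γb f s₁)
    (hs₂ : IsWardrop ℓo ℓh A D τ₂ βb γb f s₂) :
    ldiff ℓo ℓh A D (stratDist βb γb f s₁) ≤
      ldiff ℓo ℓh A D (stratDist βb γb f s₂) ∧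
    stratDist βb γb f s₂ Action.toll ≤ stratDist βb γb f s₁ Action.toll ∧
    stratDist βb γb f s₁ Action.pool ≤ stratDist βb γb f s₂ Action.pool := by
  have hA₁ : (1 : ℝ) ≤ A := by exact_mod_cast one_le_two.trans hA
  have hf : IntegrableOn f (Rbox βb γb) :=
    hfc.integrableOn_compact (isCompact_Icc.prod isCompact_Icc)
  have hf0 : ∀ p ∈ Rbox βb γb, 0 ≤ f p := fun p hp => (hfpos p hp).le
  have hδ := ldiff_stratDist_le_of_lt hD.le hA₁ hom.monotoneOn hhm.monotoneOn hf hf0 hττ hs₁ hs₂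
  have hpool := stratDist_pool_le_of_lt hf hf0 hττ hs₁ hs₂ hδ
  exact ⟨hδ, stratDist_toll_le_of_ldiff_le hD hA₁ hom hhm.monotoneOn hf hf0 hs₁ hs₂ hδ hpool,
    hpool⟩

/-- comparative statics in the toll — increasing the toll does not
decrease the latency difference or the carpool share, and does not increase
the toll-paying share. -/
theorem stmt12
    (ℓo ℓh : ℝ → ℝ) (A : ℕ) (D βb γb : ℝ) (f : ℝ × ℝ → ℝ)
    (hD : 0 < D) (hA : 2 ≤ A) (hβb : 0 < βb) (hγb : 0 < γb)
    (hoc : ContinuousOn ℓo (Ici 0)) (hom : StrictMonoOn ℓo (Ici 0))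
    (hhc : ContinuousOn ℓh (Ici 0)) (hhm : StrictMonoOn ℓh (Ici 0))
    (hfree : ℓo 0 = ℓh 0)
    (hfc : ContinuousOn f (Rbox βb γb)) (hfpos : ∀ p ∈ Rbox βb γb, 0 < f p)
    (hfint : (∫ p in Rbox βb γb, f p) = 1)
    (τ₁ τ₂ : ℝ) (hτ₁ : 0 < τ₁) (hττ : τ₁ < τ₂)
    (s₁ s₂ : ℝ × ℝ → Action)
    (hs₁ : IsWardrop ℓo ℓh A D τ₁ βb γb f s₁)
    (hs₂ : IsWardrop ℓo ℓh A D τ₂ βb γb f s₂) :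
    ldiff ℓo ℓh A D (stratDist βb γb f s₁) ≤
      ldiff ℓo ℓh A D (stratDist βb γb f s₂) ∧
    stratDist βb γb f s₂ Action.toll ≤ stratDist βb γb f s₁ Action.toll ∧
    stratDist βb γb f s₁ Action.pool ≤ stratDist βb γb f s₂ Action.pool :=
  stmt12_general ℓo ℓh A D βb γb f hD hA hom hhm hfc hfpos τ₁ τ₂ hττ s₁ s₂ hs₁ hs₂
end

section
/- Assume 0 < τ ≤ γ̄. For δ ≥ τ/β̄ define g(δ) = ∫_τ^γ̄ ∫_{τ/δ}^β̄ f(β,γ) dβ dγ and h(δ) = ∫₀^τ ∫_{γ/δ}^β̄ f(β,γ) dβ dγ. Then g and h are continuous and nondecreasing on [τ/β̄, ∞), and the map δ ↦ δ − [ℓ_o((1 − g(δ) − h(δ))·D) − ℓ_h((g(δ) + h(δ)/A)·D)] is continuous and strictly increasing on [τ/β̄, ∞). -/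
open MeasureTheory Set

open HOT

/-! For `δ ≥ τ/β̄` the lower limits `τ/δ` and `γ/δ` of the inner integrals lie in `[0, β̄]`, so
`gB` and `hB` only see `f` on the rectangle, and `f` may be replaced by its continuous, nonnegative
extension obtained by clamping to the rectangle. Both shares are then iterated integrals of a
continuous function with continuously varying limits, hence continuous. Increasing `δ` lowers
those limits, which only adds nonnegative mass: `gB` and `hB` are nondecreasing, and `gB + hB` stays
below the total mass `1`. So the ordinary-lane flow falls and the HOT-lane flow rises with `δ`, the
latency difference is nonincreasing, and `δ ↦ δ − ℓ_δ` is strictly increasing. -/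

theorem pos_and_div_le_of_div_le {a b c : ℝ} (ha : 0 < a) (hb : 0 < b) (h : a / b ≤ c) :
    0 < c ∧ a / c ≤ b := by
  have hc : 0 < c := (div_pos ha hb).trans_le h
  exact ⟨hc, (div_le_comm₀ hb hc).1 h⟩

theorem continuous_intervalIntegral_lowerLimit {f : ℝ × ℝ → ℝ} (hf : Continuous f) (c : ℝ) :
    Continuous fun p : ℝ × ℝ => ∫ x in p.1..c, f (x, p.2) := by
  refine (intervalIntegral.continuous_parametric_intervalIntegral_of_continuous
    (f := fun p x => f (x, p.2)) (μ := volume) (a₀ := c) (by fun_prop) continuous_fst).neg.congr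
    fun p => ?_
  exact (intervalIntegral.integral_symm _ _).symm

theorem continuous_iteratedIntegral_lowerLimit {f : ℝ × ℝ → ℝ} (hf : Continuous f)
    {u : ℝ → ℝ → ℝ} (hu : Continuous (Function.uncurry u)) (a b c : ℝ) :
    Continuous fun s => ∫ y in a..b, ∫ x in u s y..c, f (x, y) :=
  intervalIntegral.continuous_parametric_intervalIntegral_of_continuous'
    (f := fun s y => ∫ x in u s y..c, f (x, y))
    ((continuous_intervalIntegral_lowerLimit hf c).comp (hu.prodMk continuous_snd)) a b

theorem intervalIntegral_le_of_lowerLimit_le {g : ℝ → ℝ} (hg : Continuous g) {u v : ℝ}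
    (huv : u ≤ v) (hg0 : ∀ x ∈ Icc u v, 0 ≤ g x) (c : ℝ) :
    ∫ x in v..c, g x ≤ ∫ x in u..c, g x := by
  have hsplit := intervalIntegral.integral_add_adjacent_intervals
    (hg.intervalIntegrable (μ := volume) u v) (hg.intervalIntegrable v c)
  have := intervalIntegral.integral_nonneg (μ := volume) huv hg0
  linarith

theorem iteratedIntegral_le_of_lowerLimit_le {f : ℝ × ℝ → ℝ} (hf : Continuous f)
    (hf0 : ∀ p, 0 ≤ f p) {u v : ℝ → ℝ} (hu : Continuous u) (hv : Continuous v) {a b : ℝ}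
    (hab : a ≤ b) (huv : ∀ y ∈ Icc a b, u y ≤ v y) (c : ℝ) :
    ∫ y in a..b, ∫ x in v y..c, f (x, y) ≤ ∫ y in a..b, ∫ x in u y..c, f (x, y) := by
  have hint : ∀ w : ℝ → ℝ, Continuous w →
      IntervalIntegrable (fun y => ∫ x in w y..c, f (x, y)) volume a b := fun w hw =>
    ((continuous_intervalIntegral_lowerLimit hf c).comp
      (hw.prodMk continuous_id)).intervalIntegrable a b
  exact intervalIntegral.integral_mono_on hab (hint v hv) (hint u hu) fun y hy =>
    intervalIntegral_le_of_lowerLimit_le (by fun_prop) (huv y hy) (fun x _ => hf0 _) c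

namespace HOT

theorem exists_continuous_eqOn_Rbox {βb γb : ℝ} {f : ℝ × ℝ → ℝ}
    (hf : ContinuousOn f (Rbox βb γb)) (hβb : 0 ≤ βb) (hγb : 0 ≤ γb) :
    ∃ g : ℝ × ℝ → ℝ, Continuous g ∧ EqOn g f (Rbox βb γb) ∧ range g ⊆ f '' Rbox βb γb := by
  set proj : ℝ × ℝ → ℝ × ℝ :=
    fun p => ((projIcc 0 βb hβb p.1 : ℝ), (projIcc 0 γb hγb p.2 : ℝ))
  have hproj : ∀ p, proj p ∈ Rbox βb γb := fun p =>
    ⟨(projIcc 0 βb hβb p.1).2, (projIcc 0 γb hγb p.2).2⟩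
  refine ⟨f ∘ proj, hf.comp_continuous (by fun_prop) hproj, fun p hp => ?_,
    range_subset_iff.2 fun p => mem_image_of_mem f (hproj p)⟩
  simp [proj, projIcc_of_mem _ hp.1, projIcc_of_mem _ hp.2]

theorem integral_Rbox_eq_intervalIntegral {βb γb : ℝ} {f : ℝ × ℝ → ℝ}
    (hf : IntegrableOn f (Rbox βb γb)) (hβb : 0 ≤ βb) (hγb : 0 ≤ γb) :
    ∫ p in Rbox βb γb, f p = ∫ γ in (0:ℝ)..γb, ∫ β in (0:ℝ)..βb, f (β, γ) := by
  rw [IntegrableOn, Rbox, Measure.volume_eq_prod, ← Measure.prod_restrict] at hf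
  rw [Rbox, Measure.volume_eq_prod, ← Measure.prod_restrict, integral_prod_symm f hf,
    intervalIntegral.integral_of_le hγb, ← integral_Icc_eq_integral_Ioc]
  refine setIntegral_congr_fun measurableSet_Icc fun γ _ => ?_
  rw [intervalIntegral.integral_of_le hβb, ← integral_Icc_eq_integral_Ioc]

variable {f : ℝ × ℝ → ℝ} {τ βb γb : ℝ}

theorem continuousOn_gB (hf : Continuous f) : ContinuousOn (gB τ βb γb f) {0}ᶜ :=
  (continuous_iteratedIntegral_lowerLimit hf (u := fun s _ => s) continuous_fst τ γb βb
    ).comp_continuousOn (continuousOn_const.div continuousOn_id fun _ hδ => hδ)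

theorem continuousOn_hB (hf : Continuous f) : ContinuousOn (hB τ βb f) {0}ᶜ := by
  refine ((continuous_iteratedIntegral_lowerLimit hf (u := fun s γ => γ * s)
    (by fun_prop) 0 τ βb).comp_continuousOn continuousOn_inv₀).congr fun δ _ => ?_
  simp only [hB, Function.comp_apply, div_eq_mul_inv]

theorem monotoneOn_gB (hf : Continuous f) (hf0 : ∀ p, 0 ≤ f p) (hτ : 0 ≤ τ) (hτγ : τ ≤ γb) :
    MonotoneOn (gB τ βb γb f) (Ioi 0) := fun _ hδ₁ _ _ hδ =>
  iteratedIntegral_le_of_lowerLimit_le hf hf0 continuous_const continuous_const hτγ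
    (fun _ _ => div_le_div_of_nonneg_left hτ hδ₁ hδ) βb

theorem monotoneOn_hB (hf : Continuous f) (hf0 : ∀ p, 0 ≤ f p) (hτ : 0 ≤ τ) :
    MonotoneOn (hB τ βb f) (Ioi 0) := fun _ hδ₁ _ _ hδ =>
  iteratedIntegral_le_of_lowerLimit_le hf hf0 (by fun_prop) (by fun_prop) hτ
    (fun _ hγ => div_le_div_of_nonneg_left hγ.1 hδ₁ hδ) βb

theorem gB_nonneg (hf : Continuous f) (hf0 : ∀ p, 0 ≤ f p) (hτ : 0 < τ) (hβb : 0 < βb)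
    (hτγ : τ ≤ γb) {δ : ℝ} (hδ : δ ∈ Ici (τ / βb)) : 0 ≤ gB τ βb γb f δ := by
  -- compare with the inner integrals over the degenerate interval `[β̄, β̄]`
  simpa [gB] using iteratedIntegral_le_of_lowerLimit_le hf hf0 continuous_const continuous_const
    hτγ (fun _ _ => (pos_and_div_le_of_div_le hτ hβb hδ).2) βb

theorem hB_nonneg (hf : Continuous f) (hf0 : ∀ p, 0 ≤ f p) (hτ : 0 < τ) (hβb : 0 < βb)
    {δ : ℝ} (hδ : δ ∈ Ici (τ / βb)) : 0 ≤ hB τ βb f δ := by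
  obtain ⟨hδ₀, hτδ⟩ := pos_and_div_le_of_div_le hτ hβb hδ
  simpa [hB] using iteratedIntegral_le_of_lowerLimit_le hf hf0 (continuous_id.div_const δ)
    continuous_const hτ.le
    (fun _ hγ => (div_le_div_of_nonneg_right hγ.2 hδ₀.le).trans hτδ) βb

theorem gB_add_hB_le (hf : Continuous f) (hf0 : ∀ p, 0 ≤ f p) (hτ : 0 ≤ τ) (hτγ : τ ≤ γb)
    {δ : ℝ} (hδ : 0 < δ) :
    gB τ βb γb f δ + hB τ βb f δ ≤ ∫ γ in (0:ℝ)..γb, ∫ β in (0:ℝ)..βb, f (β, γ) := by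
  have hg := iteratedIntegral_le_of_lowerLimit_le hf hf0 continuous_const continuous_const
    hτγ (fun _ _ => div_nonneg hτ hδ.le) βb
  have hh := iteratedIntegral_le_of_lowerLimit_le hf hf0 continuous_const
    (continuous_id.div_const δ) hτ (fun _ hγ => div_nonneg hγ.1 hδ.le) βb
  have hint : Continuous fun γ => ∫ β in (0:ℝ)..βb, f (β, γ) :=
    (continuous_intervalIntegral_lowerLimit hf βb).comp (continuous_const.prodMk continuous_id)
  rw [← intervalIntegral.integral_add_adjacent_intervals (hint.intervalIntegrable 0 τ)
    (hint.intervalIntegrable τ γb)]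
  exact add_le_add hg hh |>.trans_eq (add_comm _ _)

theorem gB_eqOn_of_eqOn {f' : ℝ × ℝ → ℝ} (h : EqOn f f' (Rbox βb γb)) (hτ : 0 < τ)
    (hβb : 0 < βb) (hτγ : τ ≤ γb) : EqOn (gB τ βb γb f) (gB τ βb γb f') (Ici (τ / βb)) := by
  intro δ hδ
  obtain ⟨hδ₀, hτδ⟩ := pos_and_div_le_of_div_le hτ hβb hδ
  refine intervalIntegral.integral_congr fun γ hγ => intervalIntegral.integral_congr
    fun β hβ => h ⟨?_, ?_⟩
  · rw [uIcc_of_le hτδ] at hβ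
    exact ⟨(div_nonneg hτ.le hδ₀.le).trans hβ.1, hβ.2⟩
  · rw [uIcc_of_le hτγ] at hγ
    exact ⟨hτ.le.trans hγ.1, hγ.2⟩

theorem hB_eqOn_of_eqOn {f' : ℝ × ℝ → ℝ} (h : EqOn f f' (Rbox βb γb)) (hτ : 0 < τ)
    (hβb : 0 < βb) (hτγ : τ ≤ γb) : EqOn (hB τ βb f) (hB τ βb f') (Ici (τ / βb)) := by
  intro δ hδ
  obtain ⟨hδ₀, hτδ⟩ := pos_and_div_le_of_div_le hτ hβb hδ
  refine intervalIntegral.integral_congr fun γ hγ => intervalIntegral.integral_congr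
    fun β hβ => h ⟨?_, ?_⟩ <;> rw [uIcc_of_le hτ.le] at hγ
  · rw [uIcc_of_le ((div_le_div_of_nonneg_right hγ.2 hδ₀.le).trans hτδ)] at hβ
    exact ⟨(div_nonneg hγ.1 hδ₀.le).trans hβ.1, hβ.2⟩
  · exact ⟨hγ.1, hγ.2.trans hτγ⟩

end HOT

section LatencyGap

variable {ℓo ℓh g h : ℝ → ℝ} {A : ℕ} {D : ℝ} {s : Set ℝ}

theorem continuousOn_sub_latencyDiff (hoc : ContinuousOn ℓo (Ici 0))
    (hhc : ContinuousOn ℓh (Ici 0)) (hD : 0 ≤ D) (hgc : ContinuousOn g s)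
    (hhc' : ContinuousOn h s) (hg0 : ∀ δ ∈ s, 0 ≤ g δ) (hh0 : ∀ δ ∈ s, 0 ≤ h δ)
    (hgh : ∀ δ ∈ s, g δ + h δ ≤ 1) :
    ContinuousOn (fun δ => δ - (ℓo ((1 - g δ - h δ) * D) - ℓh ((g δ + h δ / (A : ℝ)) * D))) s := by
  have hxo : MapsTo (fun δ => (1 - g δ - h δ) * D) s (Ici 0) := fun δ hδ =>
    mul_nonneg (by linarith [hgh δ hδ]) hD
  have hxh : MapsTo (fun δ => (g δ + h δ / (A : ℝ)) * D) s (Ici 0) := fun δ hδ =>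
    mul_nonneg (add_nonneg (hg0 δ hδ) (div_nonneg (hh0 δ hδ) A.cast_nonneg)) hD
  exact continuousOn_id.sub ((hoc.comp (by fun_prop) hxo).sub (hhc.comp (by fun_prop) hxh))

theorem strictMonoOn_sub_latencyDiff (hom : MonotoneOn ℓo (Ici 0))
    (hhm : MonotoneOn ℓh (Ici 0)) (hD : 0 ≤ D) (hgm : MonotoneOn g s)
    (hhm' : MonotoneOn h s) (hg0 : ∀ δ ∈ s, 0 ≤ g δ) (hh0 : ∀ δ ∈ s, 0 ≤ h δ)
    (hgh : ∀ δ ∈ s, g δ + h δ ≤ 1) :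
    StrictMonoOn (fun δ => δ - (ℓo ((1 - g δ - h δ) * D) - ℓh ((g δ + h δ / (A : ℝ)) * D))) s := by
  intro a ha b hb hab
  have hg := hgm ha hb hab.le
  have hh := hhm' ha hb hab.le
  have hxo : ℓo ((1 - g b - h b) * D) ≤ ℓo ((1 - g a - h a) * D) :=
    hom (mul_nonneg (by linarith [hgh b hb]) hD) (mul_nonneg (by linarith [hgh a ha]) hD)
      (by gcongr)
  have hxh : ℓh ((g a + h a / (A : ℝ)) * D) ≤ ℓh ((g b + h b / (A : ℝ)) * D) :=
    hhm (mul_nonneg (add_nonneg (hg0 a ha) (div_nonneg (hh0 a ha) A.cast_nonneg)) hD)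
      (mul_nonneg (add_nonneg (hg0 b hb) (div_nonneg (hh0 b hb) A.cast_nonneg)) hD)
      (by gcongr)
  dsimp only
  linarith

end LatencyGap

theorem stmt16_general
    (ℓo ℓh : ℝ → ℝ) (A : ℕ) (D τ βb γb : ℝ) (f : ℝ × ℝ → ℝ)
    (hD : 0 < D) (hβb : 0 < βb)
    (hoc : ContinuousOn ℓo (Ici 0)) (hom : StrictMonoOn ℓo (Ici 0))
    (hhc : ContinuousOn ℓh (Ici 0)) (hhm : StrictMonoOn ℓh (Ici 0))
    (hfc : ContinuousOn f (Rbox βb γb)) (hfpos : ∀ p ∈ Rbox βb γb, 0 < f p)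
    (hfint : (∫ p in Rbox βb γb, f p) = 1)
    (hτ : 0 < τ) (hτγ : τ ≤ γb)
    (F : ℝ → ℝ)
    (hF : F = fun δ =>
      δ - (ℓo ((1 - gB τ βb γb f δ - hB τ βb f δ) * D) -
            ℓh ((gB τ βb γb f δ + hB τ βb f δ / (A : ℝ)) * D))) :
    ContinuousOn (gB τ βb γb f) (Ici (τ / βb)) ∧
    MonotoneOn (gB τ βb γb f) (Ici (τ / βb)) ∧
    ContinuousOn (hB τ βb f) (Ici (τ / βb)) ∧
    MonotoneOn (hB τ βb f) (Ici (τ / βb)) ∧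
    ContinuousOn F (Ici (τ / βb)) ∧
    StrictMonoOn F (Ici (τ / βb)) := by
  have hγb : 0 ≤ γb := hτ.le.trans hτγ
  obtain ⟨f', hf'c, hf'f, hf'range⟩ := exists_continuous_eqOn_Rbox hfc hβb.le hγb
  have hf'0 : ∀ p, 0 ≤ f' p := fun p => by
    obtain ⟨q, hq, hqp⟩ := hf'range (mem_range_self p)
    exact hqp ▸ (hfpos q hq).le
  have hpos : Ici (τ / βb) ⊆ Ioi 0 := fun δ hδ => (pos_and_div_le_of_div_le hτ hβb hδ).1
  have hg := gB_eqOn_of_eqOn hf'f.symm hτ hβb hτγ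
  have hh := hB_eqOn_of_eqOn hf'f.symm hτ hβb hτγ
  have hgc := ((continuousOn_gB hf'c).mono fun δ hδ => (hpos hδ).ne').congr hg
  have hhc' := ((continuousOn_hB hf'c).mono fun δ hδ => (hpos hδ).ne').congr hh
  have hgm := ((monotoneOn_gB hf'c hf'0 hτ.le hτγ).mono hpos).congr hg.symm
  have hhm' := ((monotoneOn_hB hf'c hf'0 hτ.le).mono hpos).congr hh.symm
  have hg0 : ∀ δ ∈ Ici (τ / βb), 0 ≤ gB τ βb γb f δ := fun δ hδ =>
    hg hδ ▸ gB_nonneg hf'c hf'0 hτ hβb hτγ hδ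
  have hh0 : ∀ δ ∈ Ici (τ / βb), 0 ≤ hB τ βb f δ := fun δ hδ =>
    hh hδ ▸ hB_nonneg hf'c hf'0 hτ hβb hδ
  have hmass : ∫ γ in (0:ℝ)..γb, ∫ β in (0:ℝ)..βb, f' (β, γ) = 1 := by
    rw [← integral_Rbox_eq_intervalIntegral (hf'c.continuousOn.integrableOn_compact
      (isCompact_Icc.prod isCompact_Icc)) hβb.le hγb, ← hfint]
    exact setIntegral_congr_fun (measurableSet_Icc.prod measurableSet_Icc) hf'f
  have hgh : ∀ δ ∈ Ici (τ / βb), gB τ βb γb f δ + hB τ βb f δ ≤ 1 := fun δ hδ =>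
    hg hδ ▸ hh hδ ▸ hmass ▸ gB_add_hB_le hf'c hf'0 hτ.le hτγ (hpos hδ)
  subst hF
  exact ⟨hgc, hgm, hhc', hhm', continuousOn_sub_latencyDiff hoc hhc hD.le hgc hhc' hg0 hh0 hgh,
    strictMonoOn_sub_latencyDiff hom.monotoneOn hhm.monotoneOn hD.le hgm hhm' hg0 hh0 hgh⟩

/-- regime-B best-response shares g, h are continuous and
nondecreasing on [τ/β̄, ∞), and δ ↦ δ − ℓ_δ(best response to δ) is continuous
and strictly increasing there. -/
theorem stmt16
    (ℓo ℓh : ℝ → ℝ) (A : ℕ) (D τ βb γb : ℝ) (f : ℝ × ℝ → ℝ)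
    (hD : 0 < D) (hA : 2 ≤ A) (hβb : 0 < βb) (hγb : 0 < γb)
    (hoc : ContinuousOn ℓo (Ici 0)) (hom : StrictMonoOn ℓo (Ici 0))
    (hhc : ContinuousOn ℓh (Ici 0)) (hhm : StrictMonoOn ℓh (Ici 0))
    (hfree : ℓo 0 = ℓh 0)
    (hfc : ContinuousOn f (Rbox βb γb)) (hfpos : ∀ p ∈ Rbox βb γb, 0 < f p)
    (hfint : (∫ p in Rbox βb γb, f p) = 1)
    (hτ : 0 < τ) (hτγ : τ ≤ γb)
    (F : ℝ → ℝ)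
    (hF : F = fun δ =>
      δ - (ℓo ((1 - gB τ βb γb f δ - hB τ βb f δ) * D) -
            ℓh ((gB τ βb γb f δ + hB τ βb f δ / (A : ℝ)) * D))) :
    ContinuousOn (gB τ βb γb f) (Ici (τ / βb)) ∧
    MonotoneOn (gB τ βb γb f) (Ici (τ / βb)) ∧
    ContinuousOn (hB τ βb f) (Ici (τ / βb)) ∧
    MonotoneOn (hB τ βb f) (Ici (τ / βb)) ∧
    ContinuousOn F (Ici (τ / βb)) ∧
    StrictMonoOn F (Ici (τ / βb)) :=
  stmt16_general ℓo ℓh A D τ βb γb f hD hβb hoc hom hhc hhm hfc hfpos hfint hτ hτγ F hF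
end
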